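/- arXiv:2311.01363 — 2 statements merged into one kernel-verified Lean document; each statement's English description precedes it below -/
import Mathlib

section
/- Let Z = [[1,0],[0,−1]], X = [[0,1],[1,0]], Y = [[0,−i],[i,0]] be the Pauli matrices, and define Ry(φ) = exp(−i(φ/2)Y) and the single-qubit observable M(φ) = Ry(φ)† Z Ry(φ). Let ψ = (|00⟩ − |11⟩)/√2 ∈ ℂ⁴ be the Bell state Φ⁻, and define the two-qubit operators A_q = M(φ^A_q) ⊗ I and B_q = I ⊗ M(φ^B_q) with angles φ^A₀ = 0, φ^A₁ = −π/2, φ^B₀ = π/4, φ^B₁ = −π/4. Then ⟨ψ, (A₀B₀ + A₁B₀ + A₀B₁ − A₁B₁) ψ⟩ = 2√2, i.e., this measurement strategy on the Bell state achieves the optimal quantum CHSH value. -/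
open Matrix Kronecker

/-- Pauli `Z` matrix. -/
def PauliZ : Matrix (Fin 2) (Fin 2) ℂ := !![1, 0; 0, -1]

/-- Pauli `X` matrix. -/
def PauliX : Matrix (Fin 2) (Fin 2) ℂ := !![0, 1; 1, 0]

/-- Pauli `Y` matrix. -/
def PauliY : Matrix (Fin 2) (Fin 2) ℂ := !![0, -Complex.I; Complex.I, 0]

/-- Rotation `Ry(φ) = exp(−i(φ/2) Y)`. -/
noncomputable def Ry (φ : ℝ) : Matrix (Fin 2) (Fin 2) ℂ :=
  NormedSpace.exp ((-(Complex.I * ((φ : ℂ) / 2))) • PauliY)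

/-- Rotated single-qubit observable `M(φ) = Ry(φ)† Z Ry(φ)`. -/
noncomputable def Mobs (φ : ℝ) : Matrix (Fin 2) (Fin 2) ℂ :=
  (Ry φ)ᴴ * PauliZ * Ry φ

/-- The Bell state `Φ⁻ = (|00⟩ − |11⟩)/√2` in `ℂ⁴ ≅ ℂ² ⊗ ℂ²`. -/
noncomputable def bellPhiMinus : Fin 2 × Fin 2 → ℂ :=
  ((Real.sqrt 2 : ℝ)⁻¹ : ℂ) •
    ((Pi.single ((0 : Fin 2), (0 : Fin 2)) 1 : Fin 2 × Fin 2 → ℂ) -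
      (Pi.single ((1 : Fin 2), (1 : Fin 2)) 1 : Fin 2 × Fin 2 → ℂ))

/-- Alice's observable `A_q = M(φ^A_q) ⊗ I`. -/
noncomputable def Aobs (φ : ℝ) : Matrix (Fin 2 × Fin 2) (Fin 2 × Fin 2) ℂ :=
  Mobs φ ⊗ₖ (1 : Matrix (Fin 2) (Fin 2) ℂ)

/-- Bob's observable `B_q = I ⊗ M(φ^B_q)`. -/
noncomputable def Bobs (φ : ℝ) : Matrix (Fin 2 × Fin 2) (Fin 2 × Fin 2) ℂ :=
  (1 : Matrix (Fin 2) (Fin 2) ℂ) ⊗ₖ Mobs φ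

/-!
Writing `Ry φ = exp ((φ/2) J)` with `J = -iY` the real rotation generator, `J² = -1` makes the
exponential a rotation matrix, so `M(φ) = cos φ Z - sin φ X`. For the Bell state `Φ⁻` the
correlation of `M(a) ⊗ M(b)` is then `cos (a + b)`, and the four CHSH angle sums
`π/4, -π/4, -π/4, -3π/4` give `√2/2, √2/2, √2/2, -√2/2`.
-/

theorem NormedSpace.exp_smul_of_mul_self_eq_neg_one {𝔸 : Type*} [NormedRing 𝔸]
    [NormedAlgebra ℝ 𝔸] {J : 𝔸} (hJ : J * J = -1) (t : ℝ) :
    NormedSpace.exp (t • J) = Real.cos t • (1 : 𝔸) + Real.sin t • J := by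
  -- `map_exp` asks for a `ℚ`-algebra structure, obtained here by restricting scalars.
  let := Algebra.compHom 𝔸 (algebraMap ℚ ℝ)
  let f := Complex.liftAux J hJ
  have hf : Continuous f := f.toLinearMap.continuous_of_finiteDimensional
  have hfI : f (t * Complex.I) = t • J := by simp [f]
  rw [← hfI, ← NormedSpace.map_exp f hf, ← Complex.exp_eq_exp_ℂ, Complex.liftAux_apply,
    Complex.exp_ofReal_mul_I_re, Complex.exp_ofReal_mul_I_im, Algebra.algebraMap_eq_smul_one]

theorem Ry_eq (φ : ℝ) :
    Ry φ = !![(Real.cos (φ / 2) : ℂ), -Real.sin (φ / 2);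
              Real.sin (φ / 2), Real.cos (φ / 2)] := by
  have hJ : !![(0 : ℂ), -1; 1, 0] * !![0, -1; 1, 0] = -1 := by
    ext i j; fin_cases i <;> fin_cases j <;> simp
  have hY :
      (-(Complex.I * ((φ : ℂ) / 2))) • PauliY = (φ / 2) • !![(0 : ℂ), -1; 1, 0] := by
    ext i j; fin_cases i <;> fin_cases j <;> simp [PauliY, Complex.ext_iff]
  -- `NormedSpace.exp` only sees the topology; any matrix norm inducing it will do.
  let : NormedRing (Matrix (Fin 2) (Fin 2) ℂ) := Matrix.linftyOpNormedRing
  let : NormedAlgebra ℝ (Matrix (Fin 2) (Fin 2) ℂ) := Matrix.linftyOpNormedAlgebra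
  rw [Ry, hY]
  refine (NormedSpace.exp_smul_of_mul_self_eq_neg_one hJ _).trans ?_
  ext i j; fin_cases i <;> fin_cases j <;> simp

theorem Mobs_eq (φ : ℝ) :
    Mobs φ = !![(Real.cos φ : ℂ), -Real.sin φ; -Real.sin φ, -Real.cos φ] := by
  obtain ⟨θ, rfl⟩ : ∃ θ, φ = 2 * θ := ⟨φ / 2, by ring⟩
  rw [Mobs, Ry_eq, mul_div_cancel_left₀ θ two_ne_zero]
  ext i j; fin_cases i <;> fin_cases j <;>
    simp [PauliZ, mul_apply, ← Complex.cos_conj, ← Complex.sin_conj, Complex.cos_two_mul',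
      Complex.sin_two_mul] <;> ring

theorem bellPhiMinus_expectation_kronecker (P Q : Matrix (Fin 2) (Fin 2) ℂ) :
    star bellPhiMinus ⬝ᵥ ((P ⊗ₖ Q) *ᵥ bellPhiMinus) =
      (P 0 0 * Q 0 0 - P 0 1 * Q 0 1 - P 1 0 * Q 1 0 + P 1 1 * Q 1 1) / 2 := by
  have hsqrt : ((Real.sqrt 2 : ℝ) : ℂ) ^ 2 = 2 := by
    norm_cast; exact Real.sq_sqrt zero_le_two
  simp [bellPhiMinus, dotProduct, mulVec, Fintype.sum_prod_type, Pi.single_apply]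
  field_simp
  rw [hsqrt]
  ring

theorem bellPhiMinus_correlation (a b : ℝ) :
    star bellPhiMinus ⬝ᵥ ((Aobs a * Bobs b) *ᵥ bellPhiMinus) = Real.cos (a + b) := by
  rw [Aobs, Bobs, ← mul_kronecker_mul, mul_one, one_mul, bellPhiMinus_expectation_kronecker,
    Mobs_eq, Mobs_eq]
  simp [Real.cos_add]
  ring

/-- Measuring the Bell state `Φ⁻` with the rotated observables given by angles
`φ^A₀ = 0`, `φ^A₁ = −π/2`, `φ^B₀ = π/4`, `φ^B₁ = −π/4` achieves the optimal quantum CHSH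
value `2√2`. -/
theorem chsh_optimal_strategy_value :
    star bellPhiMinus ⬝ᵥ
        ((Aobs 0 * Bobs (Real.pi / 4) + Aobs (-(Real.pi / 2)) * Bobs (Real.pi / 4) +
            Aobs 0 * Bobs (-(Real.pi / 4)) -
            Aobs (-(Real.pi / 2)) * Bobs (-(Real.pi / 4))) *ᵥ bellPhiMinus) =
      ((2 * Real.sqrt 2 : ℝ) : ℂ) := by
  simp only [sub_mulVec, add_mulVec, dotProduct_sub, dotProduct_add, bellPhiMinus_correlation]
  open Real in
  have hcos : cos (0 + π / 4) + cos (-(π / 2) + π / 4) + cos (0 + -(π / 4)) -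
      cos (-(π / 2) + -(π / 4)) = 2 * √2 := by
    rw [show -(π / 2) + π / 4 = -(π / 4) by ring,
      show -(π / 2) + -(π / 4) = -(π / 4 + π / 2) by ring, zero_add, zero_add, Real.cos_neg,
      Real.cos_neg, Real.cos_add_pi_div_two, Real.cos_pi_div_four,
      Real.sin_pi_div_four]
    ring
  exact_mod_cast hcos
end

section
/- Let N ≥ 1 and let a, b : {1,…,N} → {−1, 1} be arbitrary assignments of ±1 values (player i's deterministic answers to questions 0 and 1 respectively). Define the one-body symmetric correlators S₀ = Σ_i a_i and the two-body symmetric correlators S₀₀ = Σ_{i≠j} a_i a_j, S₀₁ = Σ_{i≠j} a_i b_j, S₁₁ = Σ_{i≠j} b_i b_j, where the sums over i ≠ j range over all ordered pairs of distinct indices. Then −2S₀ + (1/2)S₀₀ − S₀₁ + (1/2)S₁₁ + 2N ≥ 0. -/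
/-- For any deterministic `±1`-valued answers `a i` (to question 0) and `b i`
(to question 1) of `N` players, the N-partite symmetric Bell quantity
`−2S₀ + (1/2)S₀₀ − S₀₁ + (1/2)S₁₁ + 2N` is nonnegative, where `S₀ = ∑ i, a i` and the
two-body correlators sum over ordered pairs of distinct indices. -/
theorem nps_classical_bound
    {N : ℕ} (hN : 1 ≤ N) (a b : Fin N → ℝ)
    (ha : ∀ i, a i = -1 ∨ a i = 1) (hb : ∀ i, b i = -1 ∨ b i = 1) :
    0 ≤ -2 * (∑ i, a i) +
        (1 / 2) * (∑ i, ∑ j, if i ≠ j then a i * a j else 0) -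
        (∑ i, ∑ j, if i ≠ j then a i * b j else 0) +
        (1 / 2) * (∑ i, ∑ j, if i ≠ j then b i * b j else 0) + 2 * N := by
  classical
  have inner : ∀ (f g : Fin N → ℝ),
      (∑ i, ∑ j, if i ≠ j then f i * g j else 0)
        = (∑ i, f i) * (∑ j, g j) - ∑ i, f i * g i := by
    intro f g
    rw [Finset.sum_mul_sum, ← Finset.sum_sub_distrib]
    refine Finset.sum_congr rfl fun i _ => ?_
    have h1 : ∀ j, (if i ≠ j then f i * g j else 0)
        = f i * g j - (if i = j then f i * g j else 0) := by
      intro j; by_cases h : i = j <;> simp [h]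
    simp_rw [h1, Finset.sum_sub_distrib, Finset.sum_ite_eq]
    simp
  have hsqa : (∑ i, a i * a i) = (N : ℝ) := by
    rw [show ((N : ℝ)) = ∑ _i : Fin N, (1 : ℝ) by simp]
    exact Finset.sum_congr rfl fun i _ => by rcases ha i with h | h <;> simp [h]
  have hsqb : (∑ i, b i * b i) = (N : ℝ) := by
    rw [show ((N : ℝ)) = ∑ _i : Fin N, (1 : ℝ) by simp]
    exact Finset.sum_congr rfl fun i _ => by rcases hb i with h | h <;> simp [h]
  rw [inner a a, inner a b, inner b b, hsqa, hsqb]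
  set A := ∑ i, a i with hA
  set B := ∑ i, b i with hB
  set C := ∑ i, a i * b i with hC
  have hCbound : -(A - B) ≤ C + N - 2 * A := by
    have hpt : ∀ i ∈ Finset.univ, -(a i - b i) ≤ a i * b i + 1 - 2 * a i := by
      intro i _
      rcases ha i with h | h <;> rcases hb i with h' | h' <;> simp [h, h'] <;> norm_num
    have := Finset.sum_le_sum hpt
    have hl : (∑ i, -(a i - b i)) = -(A - B) := by
      simp [hA, hB, Finset.sum_sub_distrib, Finset.sum_neg_distrib]
    have hr : (∑ i, (a i * b i + 1 - 2 * a i)) = C + N - 2 * A := by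
      rw [Finset.sum_sub_distrib, Finset.sum_add_distrib, ← Finset.mul_sum]
      simp [hA, hC]
    rw [hl, hr] at this
    exact this
  have hz : ∀ i, ∃ z : ℤ, a i - b i = 2 * (z : ℝ) := by
    intro i
    rcases ha i with h | h <;> rcases hb i with h' | h'
    · exact ⟨0, by simp [h, h']⟩
    · exact ⟨-1, by simp [h, h']; ring⟩
    · exact ⟨1, by simp [h, h']; ring⟩
    · exact ⟨0, by simp [h, h']⟩
  choose g hg using hz
  have heq : A - B = 2 * ((∑ i, g i : ℤ) : ℝ) := by
    push_cast
    rw [Finset.mul_sum, hA, hB, ← Finset.sum_sub_distrib]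
    exact Finset.sum_congr rfl fun i _ => hg i
  set z : ℤ := ∑ i, g i with hzdef
  have hzz : (0 : ℤ) ≤ z * (z - 1) := by
    rcases le_or_gt z 0 with h | h
    · nlinarith
    · exact mul_nonneg (by omega) (by omega)
  have hzzR : (0 : ℝ) ≤ (z : ℝ) * ((z : ℝ) - 1) := by exact_mod_cast hzz
  nlinarith [hCbound, heq, hzzR, sq_nonneg (A - B)]
end
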